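/- arXiv:1804.00853 — 2 statements merged into one kernel-verified Lean document; each statement's English description precedes it below -/
import Mathlib

section
/- If σ : [0,∞) → [0,∞) is a C² convex function with σ(0) = σ'(0) = 0 and σ' concave, then for all x, y > 0 one has x·σ'(y) ≤ σ(x) + σ(y). -/
/-!
The tangent line of the convex function `σ` at `y` gives
`x σ'(y) ≤ σ(x) - σ(y) + y σ'(y)`, so it suffices that `y σ'(y) ≤ 2 σ(y)`. Since `σ'` is concave
and vanishes at `0`, it lies above its chord on `[0, y]`: `σ'(t) ≥ (t / y) σ'(y)`. Hence
`t ↦ σ(t) - σ'(y) t² / (2y)` is nondecreasing on `[0, y]`, and comparing its values at `0` and `y`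
is the required bound.
-/

open Set

theorem ConvexOn.deriv_mul_sub_le_sub {S : Set ℝ} {f : ℝ → ℝ} {x y : ℝ} (hf : ConvexOn ℝ S f)
    (hx : x ∈ S) (hy : y ∈ S) (hfy : DifferentiableAt ℝ f y) :
    deriv f y * (x - y) ≤ f x - f y := by
  rcases lt_trichotomy x y with hxy | rfl | hxy
  · have hslope := hf.slope_le_deriv hx hy hxy hfy
    rw [slope_def_field, div_le_iff₀ (sub_pos.2 hxy)] at hslope
    linarith
  · simp
  · have hslope := hf.deriv_le_slope hy hx hxy hfy
    rwa [slope_def_field, le_div_iff₀ (sub_pos.2 hxy)] at hslope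

theorem ConcaveOn.smul_map_le_map_smul_of_map_zero {𝕜 E β : Type*} [Ring 𝕜] [PartialOrder 𝕜]
    [IsOrderedRing 𝕜] [AddCommMonoid E] [AddCommMonoid β] [PartialOrder β] [Module 𝕜 E]
    [Module 𝕜 β] {s : Set E} {f : E → β} (hf : ConcaveOn 𝕜 s f) (h0s : (0 : E) ∈ s)
    (hf0 : f 0 = 0) {x : E} (hx : x ∈ s) {c : 𝕜} (hc0 : 0 ≤ c) (hc1 : c ≤ 1) :
    c • f x ≤ f (c • x) := by
  simpa [hf0] using hf.2 h0s hx (sub_nonneg.2 hc1) hc0 (sub_add_cancel 1 c)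

theorem mul_deriv_le_two_mul {f : ℝ → ℝ} (hf : Differentiable ℝ f) (hf0 : f 0 = 0)
    (hf'0 : deriv f 0 = 0) (hf' : ConcaveOn ℝ (Ici 0) (deriv f)) {y : ℝ} (hy : 0 < y) :
    y * deriv f y ≤ 2 * f y := by
  set c := deriv f y / y
  let g : ℝ → ℝ := fun t ↦ f t - c * t ^ 2 / 2
  have hg (t : ℝ) : HasDerivAt g (deriv f t - c * t) t :=
    ((hf t).hasDerivAt.sub ((hasDerivAt_pow 2 t).const_mul c |>.div_const 2)).congr_deriv
      (by norm_num; ring)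
  have hg_mono : MonotoneOn g (Icc 0 y) := by
    refine monotoneOn_of_deriv_nonneg (convex_Icc 0 y)
      (fun t _ ↦ (hg t).continuousAt.continuousWithinAt)
      (fun t _ ↦ (hg t).differentiableAt.differentiableWithinAt) fun t ht ↦ ?_
    rw [interior_Icc] at ht
    have hchord := hf'.smul_map_le_map_smul_of_map_zero self_mem_Ici hf'0 (mem_Ici.2 hy.le)
      (div_nonneg ht.1.le hy.le) ((div_le_one hy).2 ht.2.le)
    rw [smul_eq_mul, smul_eq_mul, div_mul_cancel₀ t hy.ne'] at hchord
    rw [(hg t).deriv, sub_nonneg]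
    calc c * t = t / y * deriv f y := by ring
      _ ≤ deriv f t := hchord
  have hg0y := hg_mono ⟨le_rfl, hy.le⟩ ⟨hy.le, le_rfl⟩ hy.le
  have hcy : c * y ^ 2 = y * deriv f y := by simp only [c]; field_simp
  simp only [g, hf0] at hg0y
  linarith

theorem stmt_1_general (σ : ℝ → ℝ) (hC2 : ContDiff ℝ 2 σ)
    (hconv : ConvexOn ℝ (Set.Ici 0) σ)
    (h0 : σ 0 = 0) (h0' : deriv σ 0 = 0)
    (hconc : ConcaveOn ℝ (Set.Ici 0) (deriv σ)) :
    ∀ x > (0:ℝ), ∀ y > (0:ℝ), x * deriv σ y ≤ σ x + σ y := by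
  intro x hx y hy
  have hσ : Differentiable ℝ σ := hC2.differentiable (by norm_num)
  have tangent := hconv.deriv_mul_sub_le_sub (mem_Ici.2 hx.le) (mem_Ici.2 hy.le) (hσ y)
  have euler := mul_deriv_le_two_mul hσ h0 h0' hconc hy
  linear_combination tangent + euler

theorem stmt_1 (σ : ℝ → ℝ) (hC2 : ContDiff ℝ 2 σ)
    (hconv : ConvexOn ℝ (Set.Ici 0) σ)
    (hnonneg : ∀ x ∈ Set.Ici (0:ℝ), 0 ≤ σ x)
    (h0 : σ 0 = 0) (h0' : deriv σ 0 = 0)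
    (hconc : ConcaveOn ℝ (Set.Ici 0) (deriv σ)) :
    ∀ x > (0:ℝ), ∀ y > (0:ℝ), x * deriv σ y ≤ σ x + σ y :=
  stmt_1_general σ hC2 hconv h0 h0' hconc
end

section
/- If σ : [0,∞) → [0,∞) is a C² convex function with σ(0) = σ'(0) = 0 and σ' concave, then for all x, y > 0 one has 0 ≤ σ(x+y) − σ(x) − σ(y) ≤ 2(x·σ(y) + y·σ(x))/(x+y). -/
/-!
Write `D = σ(x+y) - σ(x) - σ(y)`. A convex function vanishing at `0` has nondecreasing slope
`σ(t)/t`, hence is superadditive, so `D ≥ 0`. Likewise the concave `σ'` with `σ'(0) = 0` is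
subadditive and satisfies `σ'(t) ≥ (t/a) σ'(a)` on `[0, a]`. The first fact gives, by the mean
value theorem applied to `t ↦ σ(x+t) - σ(t)`, the bound `D ≤ y σ'(x)`; the second, after
integrating over `[0, a]`, gives `a σ'(a) ≤ 2σ(a)`. Hence
`(x+y) D = x D + y D ≤ x y σ'(x) + y x σ'(y) ≤ 2 y σ(x) + 2 x σ(y)`.
-/

open Set

section Slope

variable {𝕜 : Type*} [Field 𝕜] [LinearOrder 𝕜] [IsStrictOrderedRing 𝕜] {f : 𝕜 → 𝕜}

theorem ConvexOn.mul_map_le_mul_map_of_map_zero (hf : ConvexOn 𝕜 (Ici 0) f) (h0 : f 0 = 0)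
    {y z : 𝕜} (hy : 0 < y) (hyz : y < z) : z * f y ≤ y * f z := by
  simpa [h0] using hf.secant_mono_aux1 self_mem_Ici (hy.trans hyz).le hy hyz

theorem ConcaveOn.mul_map_le_mul_map_of_map_zero (hf : ConcaveOn 𝕜 (Ici 0) f) (h0 : f 0 = 0)
    {y z : 𝕜} (hy : 0 < y) (hyz : y < z) : y * f z ≤ z * f y := by
  have := hf.neg.mul_map_le_mul_map_of_map_zero (by simp [h0]) hy hyz
  simp only [Pi.neg_apply, mul_neg] at this
  linarith

theorem ConvexOn.add_le_map_add_of_map_zero (hf : ConvexOn 𝕜 (Ici 0) f) (h0 : f 0 = 0)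
    {x y : 𝕜} (hx : 0 < x) (hy : 0 < y) : f x + f y ≤ f (x + y) := by
  have hfx := hf.mul_map_le_mul_map_of_map_zero h0 hx (lt_add_of_pos_right x hy)
  have hfy := hf.mul_map_le_mul_map_of_map_zero h0 hy (lt_add_of_pos_left y hx)
  exact le_of_mul_le_mul_left (by linarith) (add_pos hx hy)

theorem ConcaveOn.map_add_le_of_map_zero (hf : ConcaveOn 𝕜 (Ici 0) f) (h0 : f 0 = 0)
    {x y : 𝕜} (hx : 0 < x) (hy : 0 < y) : f (x + y) ≤ f x + f y := by
  have := hf.neg.add_le_map_add_of_map_zero (by simp [h0]) hx hy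
  simp only [Pi.neg_apply] at this
  linarith

end Slope

section ConcaveDeriv

variable {f : ℝ → ℝ} (hf : Differentiable ℝ f) (hf' : ConcaveOn ℝ (Ici 0) (deriv f))
  (hf'0 : deriv f 0 = 0)
include hf hf' hf'0

theorem sub_map_add_le_mul_deriv_of_concaveOn_deriv {a b : ℝ} (ha : 0 < a) (hb : 0 ≤ b) :
    f (a + b) - f a - (f b - f 0) ≤ b * deriv f a := by
  have hg : ∀ t, HasDerivAt (fun t ↦ f (a + t) - f t) (deriv f (a + t) - deriv f t) t :=
    fun t ↦ ((hf (a + t)).hasDerivAt.comp_const_add a t).sub (hf t).hasDerivAt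
  have hg' : ∀ t ∈ interior (Ici (0 : ℝ)), deriv (fun t ↦ f (a + t) - f t) t ≤ deriv f a := by
    intro t ht
    rw [interior_Ici] at ht
    rw [(hg t).deriv]
    linarith [hf'.map_add_le_of_map_zero hf'0 ha ht]
  have := (convex_Ici 0).image_sub_le_mul_sub_of_deriv_le
    (fun t _ ↦ (hg t).continuousAt.continuousWithinAt)
    (fun t _ ↦ (hg t).differentiableAt.differentiableWithinAt) hg' 0 self_mem_Ici b hb hb
  simp only [add_zero, sub_zero] at this
  linarith

theorem mul_deriv_le_two_mul_sub_of_concaveOn_deriv {a : ℝ} (ha : 0 < a) :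
    a * deriv f a ≤ 2 * (f a - f 0) := by
  set h : ℝ → ℝ := fun t ↦ a * f t - t ^ 2 * deriv f a / 2
  have hh : ∀ t, HasDerivAt h (a * deriv f t - t * deriv f a) t := by
    intro t
    refine (((hf t).hasDerivAt.const_mul a).sub
      (((hasDerivAt_pow 2 t).mul_const (deriv f a)).div_const 2)).congr_deriv ?_
    norm_num
    ring
  have hmono : MonotoneOn h (Icc 0 a) := by
    refine monotoneOn_of_deriv_nonneg (convex_Icc 0 a)
      (fun t _ ↦ (hh t).continuousAt.continuousWithinAt)
      (fun t _ ↦ (hh t).differentiableAt.differentiableWithinAt) fun t ht ↦ ?_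
    rw [interior_Icc] at ht
    rw [(hh t).deriv, sub_nonneg]
    exact hf'.mul_map_le_mul_map_of_map_zero hf'0 ht.1 ht.2
  have := hmono (left_mem_Icc.2 ha.le) (right_mem_Icc.2 ha.le) ha.le
  simp only [h] at this
  nlinarith

end ConcaveDeriv

theorem stmt_2_general (σ : ℝ → ℝ) (hC2 : ContDiff ℝ 2 σ)
    (hconv : ConvexOn ℝ (Set.Ici 0) σ)
    (h0 : σ 0 = 0) (h0' : deriv σ 0 = 0)
    (hconc : ConcaveOn ℝ (Set.Ici 0) (deriv σ)) :
    ∀ x > (0:ℝ), ∀ y > (0:ℝ),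
      0 ≤ σ (x + y) - σ x - σ y ∧
      σ (x + y) - σ x - σ y ≤ 2 * (x * σ y + y * σ x) / (x + y) := by
  intro x hx y hy
  have hσ : Differentiable ℝ σ := hC2.differentiable (by norm_num)
  refine ⟨by linarith [hconv.add_le_map_add_of_map_zero h0 hx hy], ?_⟩
  have hDx := sub_map_add_le_mul_deriv_of_concaveOn_deriv hσ hconc h0' hx hy.le
  have hDy := sub_map_add_le_mul_deriv_of_concaveOn_deriv hσ hconc h0' hy hx.le
  have hσx := mul_deriv_le_two_mul_sub_of_concaveOn_deriv hσ hconc h0' hx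
  have hσy := mul_deriv_le_two_mul_sub_of_concaveOn_deriv hσ hconc h0' hy
  rw [add_comm y x, h0, sub_zero] at hDy
  rw [h0, sub_zero] at hDx hσx hσy
  rw [le_div_iff₀ (add_pos hx hy)]
  nlinarith [mul_le_mul_of_nonneg_left hDx hx.le, mul_le_mul_of_nonneg_left hDy hy.le,
    mul_le_mul_of_nonneg_left hσx hy.le, mul_le_mul_of_nonneg_left hσy hx.le]

theorem stmt_2 (σ : ℝ → ℝ) (hC2 : ContDiff ℝ 2 σ)
    (hconv : ConvexOn ℝ (Set.Ici 0) σ)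
    (hnonneg : ∀ x ∈ Set.Ici (0:ℝ), 0 ≤ σ x)
    (h0 : σ 0 = 0) (h0' : deriv σ 0 = 0)
    (hconc : ConcaveOn ℝ (Set.Ici 0) (deriv σ)) :
    ∀ x > (0:ℝ), ∀ y > (0:ℝ),
      0 ≤ σ (x + y) - σ x - σ y ∧
      σ (x + y) - σ x - σ y ≤ 2 * (x * σ y + y * σ x) / (x + y) :=
  stmt_2_general σ hC2 hconv h0 h0' hconc
end
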